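/- A functor F : A ⥤ B between small categories is an equivalence of categories if and only if, as an object of the arrow category Arr(Cat), it is injective with respect to the following three morphisms of Arr(Cat): (i) the square from (the unique functor ∅ ⟶ {•}) to (the functor {•} ⟶ I selecting the object 0, where I is the walking isomorphism, i.e., the codiscrete/chaotic category on two objects 0 and 1), whose bottom component {•} ⟶ I selects the object 1; (ii) the square from (the identity-on-objects functor {0 1} ⟶ {0 → 1} from the discrete category on two objects to the walking arrow) to the identity morphism of {0 → 1}; (iii) the square from (the identity-on-objects functor {0 ⇉ 1} ⟶ {0 → 1} from the walking parallel pair) to the identity morphism of {0 → 1}. -/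

import Mathlib

open CategoryTheory CategoryTheory.Limits

/-- The walking isomorphism: the codiscrete (chaotic) category on two objects. -/
abbrev WalkingIsoCat : Cat.{0, 0} := Cat.of (Codiscrete (Fin 2))

/-- The functor from the terminal category selecting the object `0` of the walking
isomorphism. -/
def selectZero : Cat.of (Discrete PUnit) ⟶ WalkingIsoCat :=
  ((Functor.const (Discrete PUnit)).obj ⟨0⟩).toCatHom

/-- The functor from the terminal category selecting the object `1` of the walking
isomorphism. -/
def selectOne : Cat.of (Discrete PUnit) ⟶ WalkingIsoCat :=
  ((Functor.const (Discrete PUnit)).obj ⟨1⟩).toCatHom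

/-- The unique functor from the empty category to the terminal category, as a morphism of
`Cat`. -/
def emptyToPoint : Cat.of (Discrete PEmpty) ⟶ Cat.of (Discrete PUnit) :=
  (Functor.empty _).toCatHom

/-- (i) The square in the arrow category of `Cat` from `∅ ⟶ {•}` to `{•} ⟶ I` (selecting `0`),
whose bottom component selects the object `1` of the walking isomorphism `I`. -/
def essSurjSquare : Arrow.mk emptyToPoint ⟶ Arrow.mk selectZero :=
  Arrow.homMk' (u := (Functor.empty _).toCatHom) (v := selectOne)
    (Cat.Hom.ext (Functor.empty_ext' _ _))

/-- The canonical identity-on-objects functor from the discrete category on two objects to the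
walking arrow `{0 → 1}` (realized as the preorder `Fin 2`), as a morphism of `Cat`. -/
def discreteTwoToWalkingArrow : Cat.of (Discrete (Fin 2)) ⟶ Cat.of (Fin 2) :=
  (Discrete.functor (fun i => i)).toCatHom

/-- (ii) The square from `{0 1} ⟶ {0 → 1}` to the identity of `{0 → 1}`. -/
def fullSquare : Arrow.mk discreteTwoToWalkingArrow ⟶ Arrow.mk (𝟙 (Cat.of (Fin 2))) :=
  Arrow.homMk' (u := discreteTwoToWalkingArrow) (v := 𝟙 (Cat.of (Fin 2))) rfl

/-- The canonical identity-on-objects functor from the walking parallel pair `{0 ⇉ 1}` to the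
walking arrow `{0 → 1}`, sending both nonidentity arrows to the arrow `0 → 1`, as a morphism of
`Cat`. -/
def parallelPairToWalkingArrow : Cat.of WalkingParallelPair ⟶ Cat.of (Fin 2) :=
  Functor.toCatHom <| show WalkingParallelPair ⥤ Fin 2 from
    parallelPair (homOfLE (by decide : (0 : Fin 2) ≤ 1)) (homOfLE (by decide))

/-- (iii) The square from `{0 ⇉ 1} ⟶ {0 → 1}` to the identity of `{0 → 1}`. -/
def faithfulSquare : Arrow.mk parallelPairToWalkingArrow ⟶ Arrow.mk (𝟙 (Cat.of (Fin 2))) :=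
  Arrow.homMk' (u := parallelPairToWalkingArrow) (v := 𝟙 (Cat.of (Fin 2))) rfl


section Aux

variable {C : Type*} [Category C]

/-- Equality of functors out of `Discrete PUnit`. -/
lemma fromPUnit_ext (F G : Discrete PUnit ⥤ C) (h : F.obj ⟨⟨⟩⟩ = G.obj ⟨⟨⟩⟩) : F = G := by
  have hobj : ∀ X, F.obj X = G.obj X := by rintro ⟨⟨⟩⟩; exact h
  refine CategoryTheory.Functor.ext hobj (fun X Y f => ?_)
  rcases X with ⟨⟨⟩⟩; rcases Y with ⟨⟨⟩⟩
  obtain rfl : f = 𝟙 _ := Subsingleton.elim _ _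
  simp

/-- Equality of functors out of `Discrete (Fin 2)`. -/
lemma fromDiscreteFinTwo_ext (F G : Discrete (Fin 2) ⥤ C) (h0 : F.obj ⟨0⟩ = G.obj ⟨0⟩)
    (h1 : F.obj ⟨1⟩ = G.obj ⟨1⟩) : F = G := by
  have hobj : ∀ X, F.obj X = G.obj X := by rintro ⟨i⟩; fin_cases i <;> assumption
  refine CategoryTheory.Functor.ext hobj (fun X Y f => ?_)
  rcases X with ⟨i⟩; rcases Y with ⟨j⟩
  obtain rfl : i = j := by simpa using f.down.down
  obtain rfl : f = 𝟙 _ := Subsingleton.elim _ _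
  simp

def isoHom {x y : C} (e : x ≅ y) : ∀ i j : Fin 2,
    ComposableArrows.Mk₁.obj x y i ⟶ ComposableArrows.Mk₁.obj x y j
  | ⟨0, _⟩, ⟨0, _⟩ => 𝟙 _
  | ⟨0, _⟩, ⟨1, _⟩ => e.hom
  | ⟨1, _⟩, ⟨0, _⟩ => e.inv
  | ⟨1, _⟩, ⟨1, _⟩ => 𝟙 _

/-- The functor `Codiscrete (Fin 2) ⥤ C` determined by an isomorphism. -/
def isoFunctor {x y : C} (e : x ≅ y) : Codiscrete (Fin 2) ⥤ C where
  obj i := ComposableArrows.Mk₁.obj x y i.as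
  map {i j} _ := isoHom e i.as j.as
  map_id := by rintro ⟨i⟩; fin_cases i <;> rfl
  map_comp := by
    rintro ⟨i⟩ ⟨j⟩ ⟨k⟩ _ _
    fin_cases i <;> fin_cases j <;> fin_cases k <;> simp [isoHom]

/-- The underlying functor of a morphism of `Cat` between bundled categories. -/
def natF {C D : Type} [Category C] [Category D] (G : Cat.of C ⟶ Cat.of D) : C ⥤ D := G.toFunctor

/-- The functor underlying `parallelPairToWalkingArrow`. -/
def ppNat : WalkingParallelPair ⥤ Fin 2 :=
  parallelPair (homOfLE (by decide : (0 : Fin 2) ≤ 1)) (homOfLE (by decide))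

lemma eqToHom_sandwich {X Y : C} (p : X = X) (q : Y = Y) (f : X ⟶ Y) :
    f = eqToHom p ≫ f ≫ eqToHom q := by simp

lemma eqToHom_sandwich' {X Y Z : C} (p : X = X) (q : Y = Z) (r : Z = Y) (f : X ⟶ Y) :
    eqToHom p ≫ (f ≫ eqToHom q) ≫ eqToHom r = f := by simp

lemma eqToHom_id_trans {X Y : C} (p : X = Y) (q : Y = X) : 𝟙 X = eqToHom p ≫ eqToHom q := by simp

lemma eqToHom_cancel {X X' Y Y' : C} (p : X = X') (q : Y' = Y) (f g : X' ⟶ Y')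
    (h : eqToHom p ≫ f ≫ eqToHom q = eqToHom p ≫ g ≫ eqToHom q) : f = g := by
  subst p q; simpa using h

end Aux


/-- A functor `F : A ⥤ B` between small categories is an equivalence of
categories if and only if, as an object of the arrow category of `Cat`, it is injective with
respect to the three squares (i), (ii) and (iii). -/
theorem equivalence_iff_injective_wrt_three_squares {A B : Type} [SmallCategory A]
    [SmallCategory B] (F : A ⥤ B) :
    F.IsEquivalence ↔
      ((∀ sq : Arrow.mk emptyToPoint ⟶ Arrow.mk (show Cat.of A ⟶ Cat.of B from F.toCatHom),
          ∃ t : Arrow.mk selectZero ⟶ Arrow.mk (show Cat.of A ⟶ Cat.of B from F.toCatHom),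
            essSurjSquare ≫ t = sq) ∧
        (∀ sq : Arrow.mk discreteTwoToWalkingArrow ⟶
            Arrow.mk (show Cat.of A ⟶ Cat.of B from F.toCatHom),
          ∃ t : Arrow.mk (𝟙 (Cat.of (Fin 2))) ⟶ Arrow.mk (show Cat.of A ⟶ Cat.of B from F.toCatHom),
            fullSquare ≫ t = sq) ∧
        (∀ sq : Arrow.mk parallelPairToWalkingArrow ⟶
            Arrow.mk (show Cat.of A ⟶ Cat.of B from F.toCatHom),
          ∃ t : Arrow.mk (𝟙 (Cat.of (Fin 2))) ⟶ Arrow.mk (show Cat.of A ⟶ Cat.of B from F.toCatHom),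
            faithfulSquare ≫ t = sq)) := by

  classical
  constructor
  · intro hF
    haveI := hF.full
    haveI := hF.faithful
    haveI := hF.essSurj
    refine ⟨?_, ?_, ?_⟩
    · -- (i) essential surjectivity square
      intro sq
      set b := sq.right.toFunctor.obj ⟨⟨⟩⟩ with hb
      let e := F.objObjPreimageIso b
      refine ⟨Arrow.homMk' (u := ((Functor.const (Discrete PUnit)).obj (F.objPreimage b)).toCatHom)
        (v := (isoFunctor e).toCatHom) (Cat.Hom.ext (fromPUnit_ext _ _ rfl)), ?_⟩
      refine Arrow.hom_ext _ _ ?_ ?_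
      · exact Cat.Hom.ext (Functor.empty_ext' _ _)
      · exact Cat.Hom.ext (fromPUnit_ext _ _ rfl)
    · -- (ii) fullness square
      intro sq
      have w : sq.left.toFunctor ⋙ F = discreteTwoToWalkingArrow.toFunctor ⋙ sq.right.toFunctor :=
        congrArg Cat.Hom.toFunctor sq.w
      let v : Fin 2 ⥤ B := sq.right.toFunctor
      have h0 : F.obj (sq.left.toFunctor.obj ⟨0⟩) = v.obj 0 := Functor.congr_obj w ⟨0⟩
      have h1 : F.obj (sq.left.toFunctor.obj ⟨1⟩) = v.obj 1 := Functor.congr_obj w ⟨1⟩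
      let f : sq.left.toFunctor.obj ⟨0⟩ ⟶ sq.left.toFunctor.obj ⟨1⟩ :=
        F.preimage (eqToHom h0 ≫ v.map (homOfLE (by decide : (0 : Fin 2) ≤ 1)) ≫
          eqToHom h1.symm)
      refine ⟨Arrow.homMk' (u := (ComposableArrows.mk₁ f : Fin 2 ⥤ A).toCatHom)
        (v := ((ComposableArrows.mk₁ f : Fin 2 ⥤ A) ⋙ F).toCatHom) rfl, ?_⟩
      refine Arrow.hom_ext _ _ ?_ ?_
      · exact Cat.Hom.ext (fromDiscreteFinTwo_ext _ _ rfl rfl)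
      · apply Cat.Hom.ext
        show (ComposableArrows.mk₁ f : Fin 2 ⥤ A) ⋙ F = sq.right.toFunctor
        refine ComposableArrows.ext₁ h0 h1 ?_
        show F.map f = _
        simp [f, ComposableArrows.hom, ComposableArrows.map']
        rfl
    · -- (iii) faithfulness square
      intro sq
      have w : natF sq.left ⋙ F = ppNat ⋙ natF sq.right :=
        congrArg Cat.Hom.toFunctor sq.w
      have hmap : (natF sq.left).map WalkingParallelPairHom.left =
          (natF sq.left).map WalkingParallelPairHom.right := by
        apply F.map_injective
        have hL := Functor.congr_hom w WalkingParallelPairHom.left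
        have hR := Functor.congr_hom w WalkingParallelPairHom.right
        exact hL.trans hR.symm
      let f0 := (natF sq.left).map WalkingParallelPairHom.left
      refine ⟨Arrow.homMk' (u := (ComposableArrows.mk₁ f0 : Fin 2 ⥤ A).toCatHom)
        (v := ((ComposableArrows.mk₁ f0 : Fin 2 ⥤ A) ⋙ F).toCatHom) rfl, ?_⟩
      refine Arrow.hom_ext _ _ ?_ ?_
      · apply Cat.Hom.ext
        show ppNat ⋙ (ComposableArrows.mk₁ f0 : Fin 2 ⥤ A) = natF sq.left
        have hobj : ∀ X, (ppNat ⋙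
            (ComposableArrows.mk₁ f0 : Fin 2 ⥤ A)).obj X = (natF sq.left).obj X := by
          rintro (_|_) <;> rfl
        refine CategoryTheory.Functor.ext hobj ?_
        rintro X Y (m : WalkingParallelPairHom X Y)
        cases X <;> cases m <;> simp [f0, hmap, ppNat]
        · exact eqToHom_sandwich _ _ _
        · exact eqToHom_sandwich _ _ _
        · exact eqToHom_id_trans _ _
        · exact eqToHom_id_trans _ _
      · apply Cat.Hom.ext
        show (ComposableArrows.mk₁ f0 : Fin 2 ⥤ A) ⋙ F = natF sq.right
        refine ComposableArrows.ext₁ (Functor.congr_obj w .zero) (Functor.congr_obj w .one) ?_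
        show F.map f0 = _
        exact Functor.congr_hom w WalkingParallelPairHom.left
  · rintro ⟨hi, hii, hiii⟩
    have hES : F.EssSurj := by
      constructor
      intro b
      obtain ⟨t, ht⟩ := hi (Arrow.homMk' (u := (Functor.empty A).toCatHom)
        (v := ((Functor.const (Discrete PUnit)).obj b).toCatHom) (Cat.Hom.ext (Functor.empty_ext' _ _)))
      have h1 : selectOne ≫ t.right = ((Functor.const (Discrete PUnit)).obj b).toCatHom :=
        congrArg CommaMorphism.right ht
      have hbb : t.right.toFunctor.obj ⟨1⟩ = b := Functor.congr_obj (congrArg Cat.Hom.toFunctor h1) ⟨⟨⟩⟩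
      have h0 : F.obj (t.left.toFunctor.obj ⟨⟨⟩⟩) = t.right.toFunctor.obj ⟨0⟩ :=
        Functor.congr_obj (congrArg Cat.Hom.toFunctor t.w) ⟨⟨⟩⟩
      have iso01 : t.right.toFunctor.obj ⟨0⟩ ≅ t.right.toFunctor.obj ⟨1⟩ :=
        t.right.toFunctor.mapIso ⟨⟨⟩, ⟨⟩, rfl, rfl⟩
      exact ⟨t.left.toFunctor.obj ⟨⟨⟩⟩, ⟨eqToIso h0 ≪≫ iso01 ≪≫ eqToIso hbb⟩⟩
    have hFull : F.Full := by
      constructor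
      intro a0 a1 g
      let mg : Cat.of (Fin 2) ⟶ Cat.of B := (ComposableArrows.mk₁ g : Fin 2 ⥤ B).toCatHom
      let u2 : Cat.of (Discrete (Fin 2)) ⟶ Cat.of A :=
        (Discrete.functor (ComposableArrows.Mk₁.obj a0 a1)).toCatHom
      have w : u2 ≫ (show Cat.of A ⟶ Cat.of B from F.toCatHom) = discreteTwoToWalkingArrow ≫ mg := by
        refine Cat.Hom.ext (fromDiscreteFinTwo_ext _ _ ?_ ?_) <;> rfl
      obtain ⟨t, ht⟩ := hii (Arrow.homMk' _ _ w)
      have hl : discreteTwoToWalkingArrow ≫ t.left = u2 := congrArg CommaMorphism.left ht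
      have hr : 𝟙 (Cat.of (Fin 2)) ≫ t.right = mg := congrArg CommaMorphism.right ht
      have hcomp : t.left ≫ (show Cat.of A ⟶ Cat.of B from F.toCatHom) = mg := t.w.trans hr
      let tl : Fin 2 ⥤ A := t.left.toFunctor
      have e0 : tl.obj 0 = a0 := Functor.congr_obj (congrArg Cat.Hom.toFunctor hl) ⟨0⟩
      have e1 : tl.obj 1 = a1 := Functor.congr_obj (congrArg Cat.Hom.toFunctor hl) ⟨1⟩
      refine ⟨eqToHom e0.symm ≫ tl.map (homOfLE (by decide : (0 : Fin 2) ≤ 1)) ≫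
        eqToHom e1, ?_⟩
      have hcomp' : tl ⋙ F = (ComposableArrows.mk₁ g : ComposableArrows B 1) :=
        congrArg Cat.Hom.toFunctor hcomp
      have hm := Functor.congr_hom hcomp' (homOfLE (by decide : (0 : Fin 2) ≤ 1))
      simp only [Functor.comp_map] at hm
      simp [F.map_comp, eqToHom_map, hm]
      exact eqToHom_sandwich' _ _ _ _
    have hFaith : F.Faithful := by
      constructor
      intro a0 a1 f g hfg
      let mf : Cat.of (Fin 2) ⟶ Cat.of B := (ComposableArrows.mk₁ (F.map f) : Fin 2 ⥤ B).toCatHom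
      let upp : Cat.of WalkingParallelPair ⟶ Cat.of A := (parallelPair f g).toCatHom
      have w : upp ≫ (show Cat.of A ⟶ Cat.of B from F.toCatHom) = parallelPairToWalkingArrow ≫ mf := by
        apply Cat.Hom.ext
        show parallelPair f g ⋙ F = ppNat ⋙ (ComposableArrows.mk₁ (F.map f) : Fin 2 ⥤ B)
        have hobj : ∀ X, (parallelPair f g ⋙ F).obj X =
            (ppNat ⋙ (ComposableArrows.mk₁ (F.map f) : Fin 2 ⥤ B)).obj X := by
          rintro (_|_) <;> rfl
        refine CategoryTheory.Functor.ext hobj ?_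
        rintro X Y (m : WalkingParallelPairHom X Y)
        cases X <;> cases m <;> simp [mf, upp, hfg, ppNat] <;> exact eqToHom_sandwich _ _ _
      obtain ⟨t, ht⟩ := hiii (Arrow.homMk' _ _ w)
      have hl : parallelPairToWalkingArrow ≫ t.left = upp := congrArg CommaMorphism.left ht
      have hl' : ppNat ⋙ natF t.left = parallelPair f g := congrArg Cat.Hom.toFunctor hl
      have h1 := Functor.congr_hom hl' WalkingParallelPairHom.left
      have h2 := Functor.congr_hom hl' WalkingParallelPairHom.right
      simp only [Functor.comp_map, ppNat, parallelPair_map_left, parallelPair_map_right] at h1 h2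
      have key := h1.symm.trans h2
      exact eqToHom_cancel _ _ _ _ key
    exact ⟨hFaith, hFull, hES⟩
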